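/- arXiv:2106.09507 — 3 statements merged into one kernel-verified Lean document; each statement's English description precedes it below -/
import Mathlib

section
/- Let Λ be an integral domain with field of fractions K, and let (A, τ) be a symmetric Λ-algebra (i.e. A is finitely generated projective as a Λ-module, τ : A → Λ is a Λ-linear central form, and the induced map A → Hom_Λ(A, Λ), a ↦ (b ↦ τ(ab)), is a Λ-module isomorphism). Extend τ K-linearly to KA := K ⊗_Λ A. If A' is a subring of KA with A ⊂ A' and τ(A') ⊂ Λ, then A = A'. -/
open scoped TensorProduct

/-- **Bonnafé–Kessar symmetrizing-form lemma.**
Let `Λ` be an integral domain with field of fractions `K`, and `(A, τ)` a symmetric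
`Λ`-algebra: `A` is finitely generated projective as a `Λ`-module, `τ : A → Λ` is a
central `Λ`-linear form, and `a ↦ (b ↦ τ (a*b))` is a bijection `A ≃ Hom_Λ(A, Λ)`.
Let `τK` be the `K`-linear extension of `τ` to `K ⊗[Λ] A`.  If `A'` is a subalgebra of
`K ⊗[Λ] A` containing (the image of) `A`, with `τK (A') ⊆ Λ`, then `A' = A`. -/
theorem stmt0 (Λ : Type*) [CommRing Λ] [IsDomain Λ]
    (K : Type*) [Field K] [Algebra Λ K] [IsFractionRing Λ K]
    (A : Type*) [Ring A] [Algebra Λ A]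
    [Module.Finite Λ A] [Module.Projective Λ A]
    (τ : A →ₗ[Λ] Λ)
    (hcentral : ∀ a b : A, τ (a * b) = τ (b * a))
    (hiso : Function.Bijective
      (fun a : A => (τ.comp (LinearMap.mulLeft Λ a) : A →ₗ[Λ] Λ)))
    (τK : (K ⊗[Λ] A) →ₗ[Λ] K)
    (hτK : ∀ (k : K) (a : A), τK (k ⊗ₜ[Λ] a) = k * algebraMap Λ K (τ a))
    (A' : Subalgebra Λ (K ⊗[Λ] A))
    (hAA' : ∀ a : A, ((1 : K) ⊗ₜ[Λ] a) ∈ A')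
    (hτA' : ∀ x ∈ A', ∃ l : Λ, τK x = algebraMap Λ K l) :
    ∀ x ∈ A', ∃ a : A, x = (1 : K) ⊗ₜ[Λ] a := by
  intro x hx
  -- Step 1: common denominator
  obtain ⟨d, hd, a, hda⟩ : ∃ d : Λ, d ≠ 0 ∧ ∃ a : A, d • x = (1 : K) ⊗ₜ[Λ] a := by
    clear hx
    induction x using TensorProduct.induction_on with
    | zero => exact ⟨1, one_ne_zero, 0, by simp⟩
    | tmul k a =>
      obtain ⟨⟨n, e⟩, h⟩ := IsLocalization.surj (nonZeroDivisors Λ) k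
      refine ⟨e, nonZeroDivisors.ne_zero e.2, n • a, ?_⟩
      rw [TensorProduct.smul_tmul', TensorProduct.tmul_smul, TensorProduct.smul_tmul']
      congr 1
      simp only [Algebra.smul_def, mul_one]
      rw [mul_comm]
      exact h
    | add y z hy hz =>
      obtain ⟨d1, hd1, a1, h1⟩ := hy
      obtain ⟨d2, hd2, a2, h2⟩ := hz
      refine ⟨d1 * d2, mul_ne_zero hd1 hd2, d2 • a1 + d1 • a2, ?_⟩
      rw [smul_add, TensorProduct.tmul_add, TensorProduct.tmul_smul,
        TensorProduct.tmul_smul, ← h1, ← h2, mul_smul, mul_comm d1 d2, mul_smul]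
      congr 1
      all_goals first | rfl | exact smul_comm _ _ _
  -- Step 2: d divides τ (a * c) for all c
  have key : ∀ c : A, ∃ l : Λ, τ (a * c) = d * l := by
    intro c
    obtain ⟨l, hl⟩ := hτA' (x * ((1 : K) ⊗ₜ[Λ] c)) (A'.mul_mem hx (hAA' c))
    refine ⟨l, ?_⟩
    have h1 : d • (x * ((1 : K) ⊗ₜ[Λ] c)) = (1 : K) ⊗ₜ[Λ] (a * c) := by
      rw [← smul_mul_assoc, hda, Algebra.TensorProduct.tmul_mul_tmul, one_mul]
    have h2 : τK (d • (x * ((1 : K) ⊗ₜ[Λ] c))) = algebraMap Λ K (τ (a * c)) := by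
      rw [h1, hτK, one_mul]
    rw [map_smul, hl] at h2
    apply IsFractionRing.injective Λ K
    rw [RingHom.map_mul, ← h2, Algebra.smul_def]
  choose l hl using key
  -- Step 3: build the linear functional c ↦ τ (a * c) / d
  have hg : ∃ g : A →ₗ[Λ] Λ, ∀ c, τ (a * c) = d * g c := by
    refine ⟨{ toFun := l, map_add' := ?_, map_smul' := ?_ }, hl⟩
    · intro c c'
      apply mul_left_cancel₀ hd
      rw [mul_add d, ← hl, ← hl, ← hl, mul_add, map_add]
    · intro r c
      apply mul_left_cancel₀ hd
      simp only [RingHom.id_apply]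
      rw [← hl, mul_smul_comm, map_smul, hl, smul_eq_mul, smul_eq_mul]
      ring
  obtain ⟨g, hg⟩ := hg
  -- Step 4: find b with τ (b * c) = g c
  obtain ⟨b, hb⟩ := hiso.2 g
  have hb' : ∀ c : A, τ (b * c) = g c := fun c => DFunLike.congr_fun hb c
  -- Step 5: a = d • b
  have hab : a = d • b := by
    apply hiso.1
    ext c
    simp only [LinearMap.comp_apply, LinearMap.mulLeft_apply, smul_mul_assoc,
      map_smul, smul_eq_mul]
    rw [hb', hg]
  -- Step 6: cancel d
  refine ⟨b, ?_⟩
  have : d • x = d • ((1 : K) ⊗ₜ[Λ] b) := by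
    rw [hda, hab, TensorProduct.tmul_smul]
  have h2 : (algebraMap Λ K d) • x = (algebraMap Λ K d) • ((1 : K) ⊗ₜ[Λ] b) := by
    rwa [algebraMap_smul, algebraMap_smul]
  have hd' : algebraMap Λ K d ≠ 0 := by
    simpa using (map_ne_zero_iff _ (IsFractionRing.injective Λ K)).mpr hd
  exact smul_right_injective _ hd' h2
end

section
/- Let S∗ be an F∗-stable maximal torus in a connected reductive group with Weyl group W and fixed maximal torus T∗. Then |(T∗ ⫽ W)^{F∗}| = (1/|W|) Σ_{w ∈ W} |T∗^{wF∗}|, where (T∗ ⫽ W)^{F∗} is the set of F∗-stable W-orbits in T∗ and T∗^{wF∗} is the fixed points of the twisted Frobenius wF∗ (Burnside/orbit-counting identity for the W-action on ⋃_w T∗^{wF∗}). -/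
/-- **Steinberg's counting formula (Burnside identity).**
Let `T` be an abelian group (a torus), `W` a finite group acting on `T` by
automorphisms, and `F : T →* T` an injective endomorphism (Frobenius) commuting with
the `W`-action, such that each twisted fixed-point set `T^{wF} = {t | w • F t = t}` is
finite.  Then `|W| · #{F-stable W-orbits} = Σ_{w ∈ W} |T^{wF}|`, where a `W`-orbit is
`F`-stable iff it contains a point of some `T^{wF}`. -/
theorem stmt14 {T W : Type*} [CommGroup T] [Group W] [Fintype W]
    [MulDistribMulAction W T]
    (F : T →* T) (hFinj : Function.Injective F)
    (hequiv : ∀ (w : W) (t : T), F (w • t) = w • F t)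
    (hfin : ∀ w : W, Set.Finite {t : T | w • F t = t}) :
    Fintype.card W *
      Nat.card {O : Quotient (MulAction.orbitRel W T) //
        ∃ (t : T) (w : W), Quotient.mk (MulAction.orbitRel W T) t = O ∧ w • F t = t}
    = ∑ w : W, Nat.card {t : T // w • F t = t} := by
  classical
  -- stabilizer of `F t` equals stabilizer of `t`
  have hstab : ∀ (w : W) (t : T), w • F t = F t ↔ w • t = t := by
    intro w t
    constructor
    · intro h; exact hFinj (by rw [hequiv, h])
    · intro h; rw [← hequiv, h]
  set X : Set T := {t : T | ∃ w : W, w • F t = t} with hX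
  have hXfin : X.Finite := by
    have : X ⊆ ⋃ w : W, {t : T | w • F t = t} := by
      intro t ⟨w, hw⟩; exact Set.mem_iUnion.2 ⟨w, hw⟩
    exact (Set.Finite.subset (Set.finite_iUnion hfin) this)
  -- X is invariant under the W-action
  have hXinv : ∀ (v : W) (t : T), t ∈ X → v • t ∈ X := by
    rintro v t ⟨w, hw⟩
    refine ⟨v * w * v⁻¹, ?_⟩
    calc (v * w * v⁻¹) • F (v • t) = (v * w * v⁻¹) • v • F t := by rw [hequiv]
      _ = v • w • F t := by rw [mul_smul, mul_smul, inv_smul_smul]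
      _ = v • t := by rw [hw]
  set Xf : Finset T := hXfin.toFinset with hXf
  have hXfmem : ∀ t : T, t ∈ Xf ↔ t ∈ X := fun t => hXfin.mem_toFinset
  set Q := Quotient (MulAction.orbitRel W T) with hQ
  set SOf : Finset Q := Xf.image (Quotient.mk (MulAction.orbitRel W T)) with hSOf
  -- LHS cardinality as a Finset card
  have hLHS : Nat.card {O : Q //
      ∃ (t : T) (w : W), Quotient.mk (MulAction.orbitRel W T) t = O ∧ w • F t = t}
      = SOf.card := by
    have hset : {O : Q | ∃ (t : T) (w : W),
        Quotient.mk (MulAction.orbitRel W T) t = O ∧ w • F t = t} = ↑SOf := by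
      ext O
      simp only [Set.mem_setOf_eq, hSOf, Finset.coe_image, Set.mem_image,
        Finset.mem_coe, hXfmem]
      constructor
      · rintro ⟨t, w, hmk, hw⟩; exact ⟨t, ⟨w, hw⟩, hmk⟩
      · rintro ⟨t, ⟨w, hw⟩, hmk⟩; exact ⟨t, w, hmk, hw⟩
    calc Nat.card {O : Q // ∃ (t : T) (w : W),
          Quotient.mk (MulAction.orbitRel W T) t = O ∧ w • F t = t}
        = Nat.card (↑SOf : Set Q) := by rw [← hset]; rfl
      _ = SOf.card := by
          rw [Nat.card_coe_set_eq, Set.ncard_coe_finset]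
  rw [hLHS]
  -- RHS as a double sum over Xf
  have hRHS : ∑ w : W, Nat.card {t : T // w • F t = t}
      = ∑ t ∈ Xf, (Finset.univ.filter (fun w : W => w • F t = t)).card := by
    have h1 : ∀ w : W, Nat.card {t : T // w • F t = t}
        = (Xf.filter (fun t => w • F t = t)).card := by
      intro w
      have : {t : T | w • F t = t} = ↑(Xf.filter (fun t => w • F t = t)) := by
        ext t
        simp only [Set.mem_setOf_eq, Finset.coe_filter, Set.mem_setOf_eq, hXfmem]
        exact ⟨fun h => ⟨⟨w, h⟩, h⟩, fun h => h.2⟩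
      calc Nat.card {t : T // w • F t = t}
          = Nat.card (↑(Xf.filter (fun t => w • F t = t)) : Set T) := by rw [← this]; rfl
        _ = _ := by rw [Nat.card_coe_set_eq, Set.ncard_coe_finset]
    simp only [h1, Finset.card_filter]
    rw [Finset.sum_comm]
  rw [hRHS]
  -- for `t ∈ X`, the number of `w` with `w • F t = t` is the stabilizer order
  have hfiber : ∀ t ∈ Xf, (Finset.univ.filter (fun w : W => w • F t = t)).card
      = Nat.card (MulAction.stabilizer W t) := by
    intro t ht
    obtain ⟨w₀, hw₀⟩ := (hXfmem t).1 ht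
    have hsetEq : {w : W | w • F t = t}
        = (fun u => w₀ * u) '' (MulAction.stabilizer W t : Set W) := by
      ext w
      simp only [Set.mem_setOf_eq, Set.mem_image, SetLike.mem_coe,
        MulAction.mem_stabilizer_iff]
      constructor
      · intro hw
        refine ⟨w₀⁻¹ * w, ?_, by group⟩
        have : (w₀⁻¹ * w) • F t = F t := by
          rw [mul_smul, hw]
          exact inv_smul_eq_iff.2 hw₀.symm
        exact (hstab _ t).1 this
      · rintro ⟨u, hu, rfl⟩
        rw [mul_smul, (hstab u t).2 hu]
        exact hw₀
    have : (Finset.univ.filter (fun w : W => w • F t = t) : Set W)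
        = {w : W | w • F t = t} := by
      ext w; simp
    calc (Finset.univ.filter (fun w : W => w • F t = t)).card
        = Nat.card {w : W | w • F t = t} := by
          rw [← Set.ncard_coe_finset, this, Nat.card_coe_set_eq]
      _ = Nat.card ((fun u => w₀ * u) '' (MulAction.stabilizer W t : Set W)) := by
          rw [hsetEq]
      _ = Nat.card (MulAction.stabilizer W t : Set W) := by
          rw [Nat.card_image_of_injective (mul_right_injective w₀)]
      _ = Nat.card (MulAction.stabilizer W t) := rfl
  rw [Finset.sum_congr rfl hfiber]
  -- group the sum over Xf by orbits
  have hmaps : ∀ t ∈ Xf, Quotient.mk (MulAction.orbitRel W T) t ∈ SOf := by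
    intro t ht; exact Finset.mem_image_of_mem _ ht
  rw [← Finset.sum_fiberwise_of_maps_to hmaps
    (fun t => Nat.card (MulAction.stabilizer W t))]
  -- each stable orbit contributes |W|
  have horbit : ∀ O ∈ SOf,
      ∑ t ∈ Xf.filter (fun t => Quotient.mk (MulAction.orbitRel W T) t = O),
        Nat.card (MulAction.stabilizer W t) = Fintype.card W := by
    intro O hO
    obtain ⟨t₀, ht₀, rfl⟩ := Finset.mem_image.1 hO
    have ht₀X : t₀ ∈ X := (hXfmem t₀).1 ht₀
    have horbfin : (MulAction.orbit W t₀).Finite := Set.finite_range _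
    have hfilter : Xf.filter (fun t => Quotient.mk (MulAction.orbitRel W T) t
        = Quotient.mk (MulAction.orbitRel W T) t₀) = horbfin.toFinset := by
      ext t
      simp only [Finset.mem_filter, hXfmem, Set.Finite.mem_toFinset]
      constructor
      · rintro ⟨-, hmk⟩
        exact Quotient.exact hmk
      · intro hmem
        obtain ⟨v, rfl⟩ := hmem
        exact ⟨hXinv v t₀ ht₀X, Quotient.sound ⟨v, rfl⟩⟩
    rw [hfilter]
    have hconst : ∀ t ∈ horbfin.toFinset,
        Nat.card (MulAction.stabilizer W t) = Nat.card (MulAction.stabilizer W t₀) := by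
      intro t ht
      obtain ⟨v, rfl⟩ := horbfin.mem_toFinset.1 ht
      rw [MulAction.stabilizer_smul_eq_stabilizer_map_conj]
      exact Nat.card_congr
        (Subgroup.equivMapOfInjective _ _ (MulAut.conj v).injective).symm.toEquiv
    rw [Finset.sum_congr rfl hconst, Finset.sum_const, smul_eq_mul]
    have hcard1 : horbfin.toFinset.card = Nat.card (MulAction.orbit W t₀) := by
      rw [← Set.ncard_coe_finset, horbfin.coe_toFinset, Nat.card_coe_set_eq]
    have hcard2 : Nat.card (MulAction.orbit W t₀)
        = Nat.card (W ⧸ MulAction.stabilizer W t₀) :=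
      Nat.card_congr (MulAction.orbitEquivQuotientStabilizer W t₀)
    rw [hcard1, hcard2, ← Nat.card_eq_fintype_card,
      Subgroup.card_eq_card_quotient_mul_card_subgroup (MulAction.stabilizer W t₀)]
  rw [Finset.sum_congr rfl horbit, Finset.sum_const, smul_eq_mul, mul_comm]
end

section
/- Let W = {1, s} ≅ ℤ/2 act on X = ℤ² = ℤε₁ ⊕ ℤε₂ by swapping ε₁ and ε₂ (the GL₂ Weyl group), and let F act on X by multiplication by q. Let I ⊂ ℤ[X]^W be the ideal generated by {F(f) − f}. Then B := ℤ[X]^W/I is a free ℤ-module of rank q(q−1), with basis { r((i+j)ε₁ + jε₂) + I : 0 ≤ i ≤ q−1, 0 ≤ j ≤ q−2 }, where r(λ) denotes the W-orbit sum of e(λ). -/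
noncomputable section

/-- The swap involution of the group algebra `ℤ[ℤ²]` induced by `s : ε₁ ↔ ε₂`
(the `GL₂` Weyl group action). -/
def glSwap : AddMonoidAlgebra ℤ (ℤ × ℤ) ≃ₐ[ℤ] AddMonoidAlgebra ℤ (ℤ × ℤ) :=
  AddMonoidAlgebra.domCongr ℤ ℤ (AddEquiv.prodComm : ℤ × ℤ ≃+ ℤ × ℤ)

/-- The invariant ring `ℤ[X]^W` for `X = ℤ² = ℤε₁ ⊕ ℤε₂` and `W = {1, s}` the swap. -/
def glInv : Subalgebra ℤ (AddMonoidAlgebra ℤ (ℤ × ℤ)) :=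
  AlgHom.equalizer glSwap.toAlgHom (AlgHom.id ℤ (AddMonoidAlgebra ℤ (ℤ × ℤ)))

/-- The `W`-orbit sum `r(λ) = Σ_{μ ∈ Wλ} e(μ) ∈ ℤ[X]^W`. -/
def glR (l : ℤ × ℤ) : AddMonoidAlgebra ℤ (ℤ × ℤ) :=
  ∑ μ ∈ ({l, l.swap} : Finset (ℤ × ℤ)), AddMonoidAlgebra.single μ 1

/-!
Write `E b = e(b, b)` and `H d = e(d, 0) + e(0, d)`, so that `r(b + d, b) = E b * H d` for `d ≠ 0`
and `H m * H n = H (m + n) + E n * H (m - n)`. Modulo `I` we have `E (b + q - 1) ≡ E b` (from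
`F (E 1) = E q`) and `H q ≡ H 1`; these relations reduce every orbit sum, hence all of `ℤ[X]^W`,
to the `r((i + j)ε₁ + jε₂)` with `i < q`, `j < q - 1`.

For independence let `A = ℤ[ℤ/(q - 1)]` with generator `ε` and
`D = A[x] / (x^(2q) - x^(q+1) - ε x^(q-1) + ε^q)`. The units `x` and `y = ε x⁻¹` of `D` satisfy
`x^q + y^q = x + y` and `x^q y^q = x y`, and a symmetric Laurent polynomial in `x, y` only depends
on `x + y` and `x y`, so `e(a, b) ↦ x^a y^b` kills `I`. Now `D` is free over `ℤ` on the `ε^j x^k`,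
`k < 2q`, and `x^(q-1)` times the image of `r((i + j)ε₁ + jε₂)` is `ε^j x^(q-1+i)` plus, when
`i > 0`, a term in `x^(q-1-i)`; so the coefficients of the `ε^j x^(q-1+i)` separate the candidates.
-/

lemma pow_add_pow_eq_of_add_eq_of_mul_eq {R : Type*} [CommRing R] {x y x' y' : R}
    (hs : x' + y' = x + y) (hp : x' * y' = x * y) (n : ℕ) : x' ^ n + y' ^ n = x ^ n + y ^ n := by
  induction n using Nat.twoStepInduction with
  | zero => simp
  | one => simpa using hs
  | more n ih₀ ih₁ =>
    have newton : ∀ a b : R, a ^ (n + 2) + b ^ (n + 2)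
        = (a + b) * (a ^ (n + 1) + b ^ (n + 1)) - a * b * (a ^ n + b ^ n) := fun a b => by ring
    rw [newton, newton, hs, hp, ih₀, ih₁]

lemma AdjoinRoot.isUnit_root_of_isUnit_coeff_zero {R : Type*} [CommRing R] {g : Polynomial R}
    (h : IsUnit (g.coeff 0)) : IsUnit (AdjoinRoot.root g) := by
  obtain ⟨p, hp⟩ := Polynomial.X_dvd_sub_C (p := g)
  have hroot : AdjoinRoot.root g * AdjoinRoot.mk g p = -AdjoinRoot.of g (g.coeff 0) := by
    have := congrArg (AdjoinRoot.mk g) hp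
    rw [map_sub, AdjoinRoot.mk_self, AdjoinRoot.mk_C, map_mul, AdjoinRoot.mk_X] at this
    rw [← this, zero_sub]
  exact isUnit_of_mul_isUnit_left (hroot ▸ (h.map _).neg)

namespace GL2

open AddMonoidAlgebra

local notation "𝓡" => AddMonoidAlgebra ℤ (ℤ × ℤ)

lemma glSwap_single (l : ℤ × ℤ) (c : ℤ) : glSwap (single l c) = single l.swap c :=
  domCongr_single ..

lemma coeff_glSwap (f : 𝓡) (μ : ℤ × ℤ) : (glSwap f).coeff μ = f.coeff μ.swap :=
  coeff_domCongr ..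

lemma glR_of_ne {l : ℤ × ℤ} (h : l.1 ≠ l.2) : glR l = single l 1 + single l.swap 1 :=
  Finset.sum_pair fun he => h (congrArg Prod.fst he)

lemma glR_diag (a : ℤ) : glR (a, a) = single (a, a) 1 := by
  simp [glR]

lemma glR_swap (l : ℤ × ℤ) : glR l.swap = glR l := by
  rw [glR, glR, Prod.swap_swap, Finset.pair_comm]

lemma glR_mem (l : ℤ × ℤ) : glR l ∈ glInv := by
  change glSwap (glR l) = glR l
  rw [glR, map_sum]
  simp only [glSwap_single]
  rw [← Finset.sum_image (f := fun μ => single μ 1) fun x _ y _ h => Prod.swap_injective h]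
  simp [Finset.pair_comm]

lemma coeff_glR (l μ : ℤ × ℤ) :
    (glR l).coeff μ = if μ ∈ ({l, l.swap} : Finset (ℤ × ℤ)) then 1 else 0 := by
  simp only [glR, coeff_sum, coeff_single, Finsupp.finsetSum_apply, Finsupp.single_apply]
  rw [Finset.sum_ite_eq']

lemma coeff_sub_smul_glR {f : 𝓡} (hf : glSwap f = f) (l μ : ℤ × ℤ) :
    (f - f.coeff l • glR l).coeff μ
      = if μ ∈ ({l, l.swap} : Finset (ℤ × ℤ)) then 0 else f.coeff μ := by
  have hsymm : f.coeff l.swap = f.coeff l := by rw [← coeff_glSwap, hf]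
  rw [coeff_sub, coeff_smul, Finsupp.sub_apply, Finsupp.smul_apply, coeff_glR]
  split_ifs with hμ
  · simp only [Finset.mem_insert, Finset.mem_singleton] at hμ
    rcases hμ with rfl | rfl <;> simp [hsymm]
  · simp

lemma mem_span_glR {f : 𝓡} (hf : glSwap f = f) : f ∈ Submodule.span ℤ (Set.range glR) := by
  induction hn : f.coeff.support.card using Nat.strong_induction_on generalizing f with
  | _ n ih =>
  obtain hf0 | ⟨l, hl⟩ := f.coeff.support.eq_empty_or_nonempty
  · rw [Finsupp.support_eq_empty, coeff_eq_zero] at hf0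
    simp [hf0]
  set g := f - f.coeff l • glR l with hg
  have hg_inv : glSwap g = g := by
    rw [hg, map_sub, map_smul, hf, show glSwap (glR l) = glR l from glR_mem l]
  have hg_supp : g.coeff.support ⊆ f.coeff.support.erase l := by
    intro μ hμ
    rw [Finsupp.mem_support_iff, hg, coeff_sub_smul_glR hf] at hμ
    split_ifs at hμ with hμl
    · exact absurd rfl hμ
    · exact Finset.mem_erase.mpr ⟨fun h => hμl (h ▸ Finset.mem_insert_self _ _),
        Finsupp.mem_support_iff.mpr hμ⟩
  have hg_card : g.coeff.support.card < n :=
    hn ▸ (Finset.card_le_card hg_supp).trans_lt (Finset.card_erase_lt_of_mem hl)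
  rw [← sub_add_cancel f (f.coeff l • glR l)]
  exact add_mem (ih _ hg_card hg_inv rfl)
    (Submodule.smul_mem _ _ (Submodule.subset_span ⟨l, rfl⟩))

def orbitSum (l : ℤ × ℤ) : glInv := ⟨glR l, glR_mem l⟩

def axisSum (d : ℤ) : glInv :=
  ⟨single (d, 0) 1 + single (0, d) 1, by
    change glSwap _ = _
    rw [map_add, glSwap_single, glSwap_single, add_comm]
    rfl⟩

lemma coe_orbitSum_diag (a : ℤ) : (orbitSum (a, a) : 𝓡) = single (a, a) 1 := glR_diag a

lemma orbitSum_swap (l : ℤ × ℤ) : orbitSum l.swap = orbitSum l := Subtype.ext (glR_swap l)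

lemma orbitSum_diag_mul (a b : ℤ) :
    orbitSum (a, a) * orbitSum (b, b) = orbitSum (a + b, a + b) := by
  apply Subtype.ext
  simp only [Subalgebra.coe_mul, coe_orbitSum_diag, single_mul_single, Prod.mk_add_mk, mul_one]

lemma axisSum_zero : axisSum 0 = 2 := by
  apply Subtype.ext
  rw [← one_add_one_eq_two]
  rfl

lemma axisSum_mul (m n : ℤ) :
    axisSum m * axisSum n = axisSum (m + n) + orbitSum (n, n) * axisSum (m - n) := by
  apply Subtype.ext
  simp only [axisSum, Subalgebra.coe_mul, Subalgebra.coe_add, coe_orbitSum_diag, add_mul, mul_add,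
    single_mul_single, Prod.mk_add_mk, mul_one, add_zero, zero_add, add_sub_cancel]
  abel

lemma orbitSum_diag_mul_axisSum (b d : ℤ) (hd : d ≠ 0) :
    orbitSum (b, b) * axisSum d = orbitSum (b + d, b) := by
  apply Subtype.ext
  simp only [axisSum, Subalgebra.coe_mul, coe_orbitSum_diag, mul_add, single_mul_single,
    Prod.mk_add_mk, mul_one, add_zero]
  change _ = glR (b + d, b)
  rw [glR_of_ne (by simpa using hd)]
  rfl

lemma exists_orbitSum_diag_mul_axisSum_natAbs (b d : ℤ) :
    ∃ c, orbitSum (b, b) * axisSum d = orbitSum (c, c) * axisSum d.natAbs := by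
  rcases le_or_gt 0 d with hd | hd
  · exact ⟨b, by rw [Int.natAbs_of_nonneg hd]⟩
  · refine ⟨b + d, ?_⟩
    rw [Int.natCast_natAbs, abs_of_neg hd, orbitSum_diag_mul_axisSum _ _ hd.ne,
      orbitSum_diag_mul_axisSum _ _ (by omega), add_neg_cancel_right, ← orbitSum_swap]
    rfl

lemma mem_span_orbitSum (x : glInv) : x ∈ Submodule.span ℤ (Set.range orbitSum) := by
  have h := mem_span_glR x.2
  rw [show Set.range glR = glInv.val.toLinearMap '' Set.range orbitSum by
    rw [← Set.range_comp]; rfl, ← Submodule.map_span] at h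
  obtain ⟨y, hy, hyx⟩ := h
  rwa [← Subtype.ext hyx]

section Frobenius

variable {q : ℕ} {F : glInv →ₐ[ℤ] glInv}
  (hF : ∀ f : glInv, (F f : 𝓡) = mapDomain (fun l : ℤ × ℤ => (q : ℤ) • l) (f : 𝓡))
include hF

lemma map_orbitSum_diag (b : ℤ) : F (orbitSum (b, b)) = orbitSum (q * b, q * b) :=
  Subtype.ext <| by rw [hF, coe_orbitSum_diag, coe_orbitSum_diag, mapDomain_single]; rfl

lemma map_axisSum (d : ℤ) : F (axisSum d) = axisSum (q * d) :=
  Subtype.ext <| by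
    rw [hF]
    simp only [axisSum, mapDomain_add, mapDomain_single, Prod.smul_mk, smul_eq_mul, mul_zero]

variable {I : Ideal glInv} (hFI : ∀ f, F f - f ∈ I)
include hFI

lemma mk_orbitSum_diag_add_sub_one (b : ℤ) :
    Ideal.Quotient.mk I (orbitSum (b + (q - 1), b + (q - 1))) =
      Ideal.Quotient.mk I (orbitSum (b, b)) := by
  refine Ideal.Quotient.eq.mpr ?_
  have h : orbitSum (b + (q - 1), b + (q - 1)) - orbitSum (b, b)
      = orbitSum (b - 1, b - 1) * (F (orbitSum (1, 1)) - orbitSum (1, 1)) := by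
    rw [map_orbitSum_diag hF, mul_sub, orbitSum_diag_mul, orbitSum_diag_mul]
    congr 3 <;> ring
  rw [h]
  exact I.mul_mem_left _ (hFI _)

lemma mk_orbitSum_diag_emod (b : ℤ) :
    Ideal.Quotient.mk I (orbitSum (b, b)) =
      Ideal.Quotient.mk I (orbitSum (b % (q - 1), b % (q - 1))) := by
  have shift : ∀ k c : ℤ, Ideal.Quotient.mk I (orbitSum (c + (q - 1) * k, c + (q - 1) * k)) =
      Ideal.Quotient.mk I (orbitSum (c, c)) := by
    intro k
    induction k using Int.induction_on with
    | zero => simp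
    | succ k ih =>
      intro c
      rw [mul_add_one, ← add_assoc, mk_orbitSum_diag_add_sub_one hF hFI, ih]
    | pred k ih =>
      intro c
      rw [← ih c, ← mk_orbitSum_diag_add_sub_one hF hFI (c + (q - 1) * (-k - 1))]
      congr 3 <;> ring
  rw [← shift (b / (q - 1)) (b % (q - 1)), Int.emod_add_mul_ediv]

lemma mk_axisSum_q : Ideal.Quotient.mk I (axisSum q) = Ideal.Quotient.mk I (axisSum 1) := by
  refine Ideal.Quotient.eq.mpr ?_
  simpa [map_axisSum hF] using hFI (axisSum 1)

lemma mk_orbitSum_diag_mul_axisSum_eq (b d : ℤ) :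
    Ideal.Quotient.mk I (orbitSum (b, b) * axisSum d) =
      Ideal.Quotient.mk I (orbitSum (b, b) * axisSum (d - q + 1))
        + Ideal.Quotient.mk I (orbitSum (b + 1, b + 1) * axisSum (d - q - 1))
        - Ideal.Quotient.mk I (orbitSum (b + q, b + q) * axisSum (d - 2 * q)) := by
  have hd : orbitSum (b, b) * axisSum d = orbitSum (b, b) * (axisSum (d - q) * axisSum q)
      - orbitSum (b + q, b + q) * axisSum (d - 2 * q) := by
    rw [axisSum_mul, ← orbitSum_diag_mul]
    ring_nf
  have h1 : orbitSum (b, b) * (axisSum (d - q) * axisSum 1) = orbitSum (b, b) * axisSum (d - q + 1)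
      + orbitSum (b + 1, b + 1) * axisSum (d - q - 1) := by
    rw [axisSum_mul, ← orbitSum_diag_mul]
    ring
  rw [hd, map_sub, map_mul, map_mul, mk_axisSum_q hF hFI, ← map_mul, ← map_mul, h1, map_add]

end Frobenius

def orbitBasisFamily (q : ℕ) (I : Ideal glInv) (ij : Fin q × Fin (q - 1)) : glInv ⧸ I :=
  Ideal.Quotient.mk I (orbitSum (((ij.1 : ℕ) + (ij.2 : ℕ) : ℤ), ((ij.2 : ℕ) : ℤ)))

section Spanning

variable {q : ℕ} (hq : 2 ≤ q) {F : glInv →ₐ[ℤ] glInv}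
  (hF : ∀ f : glInv, (F f : 𝓡) = mapDomain (fun l : ℤ × ℤ => (q : ℤ) • l) (f : 𝓡))
  {I : Ideal glInv} (hFI : ∀ f, F f - f ∈ I)
include hq hF hFI

lemma mk_orbitSum_diag_mem_span (b : ℤ) :
    Ideal.Quotient.mk I (orbitSum (b, b)) ∈
      Submodule.span ℤ (Set.range (orbitBasisFamily q I)) := by
  have hm : (0 : ℤ) < q - 1 := by omega
  have hj0 := Int.emod_nonneg b hm.ne'
  have hjq := Int.emod_lt_of_pos b hm
  refine Submodule.subset_span ⟨(⟨0, by omega⟩, ⟨(b % (q - 1)).toNat, by omega⟩), ?_⟩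
  simp [orbitBasisFamily, Int.toNat_of_nonneg hj0, ← mk_orbitSum_diag_emod hF hFI]

lemma mk_orbitSum_diag_mul_axisSum_mem_span_of_lt (b : ℤ) {d : ℕ} (hd0 : d ≠ 0) (hd : d < q) :
    Ideal.Quotient.mk I (orbitSum (b, b) * axisSum d) ∈
      Submodule.span ℤ (Set.range (orbitBasisFamily q I)) := by
  have hm : (0 : ℤ) < q - 1 := by omega
  have hj0 := Int.emod_nonneg b hm.ne'
  have hjq := Int.emod_lt_of_pos b hm
  refine Submodule.subset_span ⟨(⟨d, hd⟩, ⟨(b % (q - 1)).toNat, by omega⟩), ?_⟩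
  rw [map_mul, mk_orbitSum_diag_emod hF hFI, ← map_mul,
    orbitSum_diag_mul_axisSum _ _ (by exact_mod_cast hd0)]
  simp [orbitBasisFamily, Int.toNat_of_nonneg hj0, add_comm]

lemma mk_orbitSum_diag_mul_axisSum_mem_span (d : ℕ) (b : ℤ) :
    Ideal.Quotient.mk I (orbitSum (b, b) * axisSum d) ∈
      Submodule.span ℤ (Set.range (orbitBasisFamily q I)) := by
  induction d using Nat.strong_induction_on generalizing b with
  | _ d ih =>
  have ih' : ∀ c k, k.natAbs < d → Ideal.Quotient.mk I (orbitSum (c, c) * axisSum k) ∈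
      Submodule.span ℤ (Set.range (orbitBasisFamily q I)) := fun c k hk => by
    obtain ⟨c', hc'⟩ := exists_orbitSum_diag_mul_axisSum_natAbs c k
    exact hc' ▸ ih _ hk c'
  rcases Nat.lt_trichotomy d q with hdq | rfl | hdq
  · rcases eq_or_ne d 0 with rfl | hd0
    · rw [Nat.cast_zero, axisSum_zero, mul_two, map_add]
      exact add_mem (mk_orbitSum_diag_mem_span hq hF hFI b)
        (mk_orbitSum_diag_mem_span hq hF hFI b)
    · exact mk_orbitSum_diag_mul_axisSum_mem_span_of_lt hq hF hFI b hd0 hdq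
  · rw [map_mul, mk_axisSum_q hF hFI, ← map_mul]
    exact ih' b 1 (by omega)
  · rw [mk_orbitSum_diag_mul_axisSum_eq hF hFI]
    exact sub_mem (add_mem (ih' _ _ (by omega)) (ih' _ _ (by omega))) (ih' _ _ (by omega))

lemma mk_orbitSum_mem_span (l : ℤ × ℤ) :
    Ideal.Quotient.mk I (orbitSum l) ∈
      Submodule.span ℤ (Set.range (orbitBasisFamily q I)) := by
  obtain ⟨a, b⟩ := l
  rcases eq_or_ne a b with rfl | hab
  · exact mk_orbitSum_diag_mem_span hq hF hFI a
  · obtain ⟨c, hc⟩ := exists_orbitSum_diag_mul_axisSum_natAbs b (a - b)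
    rw [← add_sub_cancel b a, ← orbitSum_diag_mul_axisSum b _ (sub_ne_zero.mpr hab), hc]
    exact mk_orbitSum_diag_mul_axisSum_mem_span hq hF hFI _ c

lemma span_orbitBasisFamily : Submodule.span ℤ (Set.range (orbitBasisFamily q I)) = ⊤ := by
  refine Submodule.eq_top_iff'.mpr fun x => ?_
  obtain ⟨y, rfl⟩ := Ideal.Quotient.mk_surjective x
  induction mem_span_orbitSum y using Submodule.span_induction with
  | mem x hx =>
    obtain ⟨l, rfl⟩ := hx
    exact mk_orbitSum_mem_span hq hF hFI l
  | zero => simp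
  | add x y _ _ hx hy => simpa using add_mem hx hy
  | smul n x _ hx => simpa using Submodule.smul_mem _ n hx

end Spanning

section EvalUnits

variable {R : Type*} [CommRing R]

def unitsMonomial (u w : Rˣ) : Multiplicative (ℤ × ℤ) →* R where
  toFun l := ((u ^ l.toAdd.1 * w ^ l.toAdd.2 : Rˣ) : R)
  map_one' := by simp
  map_mul' l m := by
    rw [← Units.val_mul]
    simp only [toAdd_mul, Prod.fst_add, Prod.snd_add, zpow_add, mul_mul_mul_comm]

def evalUnits (u w : Rˣ) : 𝓡 →ₐ[ℤ] R := lift ℤ R (ℤ × ℤ) (unitsMonomial u w)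

variable (u w : Rˣ)

lemma evalUnits_single (l : ℤ × ℤ) (c : ℤ) :
    evalUnits u w (single l c) = c • ((u ^ l.1 * w ^ l.2 : Rˣ) : R) :=
  lift_single ..

lemma evalUnits_glR_diag (a : ℤ) : evalUnits u w (glR (a, a)) = ((u * w) ^ a : Rˣ) := by
  rw [glR_diag, evalUnits_single, one_smul, mul_zpow]

lemma evalUnits_glR_add (c : ℤ) {d : ℕ} (hd : d ≠ 0) :
    evalUnits u w (glR (c + d, c)) = ((u * w) ^ c : Rˣ) * ((u : R) ^ d + (w : R) ^ d) := by
  rw [glR_of_ne (by simpa using hd), map_add, evalUnits_single, evalUnits_single, one_smul,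
    one_smul, mul_add, ← Units.val_pow_eq_pow_val, ← Units.val_pow_eq_pow_val,
    ← Units.val_mul, ← Units.val_mul]
  simp only [Prod.swap_prod_mk, mul_zpow]
  congr 2
  · rw [zpow_add, zpow_natCast, mul_right_comm]
  · rw [zpow_add, zpow_natCast, mul_assoc]

lemma evalUnits_mapDomain_zsmul (n : ℤ) (f : 𝓡) :
    evalUnits u w (mapDomain (fun l : ℤ × ℤ => n • l) f) = evalUnits (u ^ n) (w ^ n) f := by
  induction f using AddMonoidAlgebra.induction_linear with
  | zero => simp
  | add f g hf hg => rw [mapDomain_add, map_add, map_add, hf, hg]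
  | single l c =>
    rw [mapDomain_single, evalUnits_single, evalUnits_single, ← zpow_mul, ← zpow_mul]
    simp [mul_comm]

variable {u w}

lemma evalUnits_eq_of_mem_glInv {u' w' : Rˣ} (hs : (u' : R) + w' = u + w) (hp : u' * w' = u * w)
    {f : 𝓡} (hf : f ∈ glInv) : evalUnits u' w' f = evalUnits u w f := by
  have heq : Set.EqOn (evalUnits u' w').toLinearMap (evalUnits u w).toLinearMap
      (Set.range glR) := by
    rintro _ ⟨⟨a, b⟩, rfl⟩
    wlog hba : b ≤ a generalizing a b
    · simpa [← glR_swap (a, b)] using this b a (by omega)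
    obtain ⟨d, rfl⟩ : ∃ d : ℕ, a = b + d := ⟨(a - b).toNat, by omega⟩
    rcases eq_or_ne d 0 with rfl | hd
    · simp [evalUnits_glR_diag, hp]
    · simp [evalUnits_glR_add _ _ _ hd, hp, pow_add_pow_eq_of_add_eq_of_mul_eq hs
        (by simpa using congrArg Units.val hp) d]
  exact LinearMap.eqOn_span heq (mem_span_glR hf)

end EvalUnits

section FrobAlg

open Polynomial

variable (q : ℕ)

abbrev Cyc := AddMonoidAlgebra ℤ (ZMod (q - 1))

def cycGen : Cyc q := single 1 1

lemma cycGen_pow (n : ℕ) : cycGen q ^ n = single (n : ZMod (q - 1)) 1 := by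
  rw [cycGen, single_pow, one_pow, nsmul_one]

lemma cycGen_pow_sub_one : cycGen q ^ (q - 1) = 1 := by
  rw [cycGen_pow, ZMod.natCast_self, one_def]

-- With `x = e(ε₁)` and `y = ε x⁻¹ = e(ε₂)`, this is `x ^ q * (x ^ q + y ^ q - x - y)`.
def frobPoly : (Cyc q)[X] :=
  X ^ (2 * q) - X ^ (q + 1) - C (cycGen q) * X ^ (q - 1) + C (cycGen q ^ q)

abbrev FrobAlg := AdjoinRoot (frobPoly q)

variable {q} (hq : 2 ≤ q)
include hq

lemma frobPoly_eq_X_pow_add :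
    ∃ p : (Cyc q)[X], p.degree < ((2 * q : ℕ) : WithBot ℕ) ∧
      frobPoly q = X ^ (2 * q) + p := by
  have hle :
      (-X ^ (q + 1) - C (cycGen q) * X ^ (q - 1) + C (cycGen q ^ q)).natDegree ≤ q + 1 := by
    compute_degree
    all_goals omega
  refine ⟨_, (degree_le_of_natDegree_le hle).trans_lt ?_, by rw [frobPoly]; ring⟩
  exact_mod_cast (by omega : q + 1 < 2 * q)

lemma frobPoly_monic : (frobPoly q).Monic := by
  obtain ⟨p, hp, h⟩ := frobPoly_eq_X_pow_add hq
  exact h ▸ monic_X_pow_add hp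

lemma natDegree_frobPoly : (frobPoly q).natDegree = 2 * q := by
  obtain ⟨p, hp, h⟩ := frobPoly_eq_X_pow_add hq
  rw [h, natDegree_add_eq_left_of_degree_lt (by rwa [degree_X_pow]), natDegree_X_pow]

lemma isUnit_cycGen : IsUnit (cycGen q) :=
  IsUnit.of_pow_eq_one (cycGen_pow_sub_one q) (by omega)

lemma isUnit_root_frobPoly : IsUnit (AdjoinRoot.root (frobPoly q)) := by
  refine AdjoinRoot.isUnit_root_of_isUnit_coeff_zero ?_
  have : (frobPoly q).coeff 0 = cycGen q ^ q := by
    simp [frobPoly, coeff_X_pow, coeff_C, -map_pow, show q ≠ 0 by omega,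
      show 0 ≠ q - 1 by omega]
  rw [this]
  exact (isUnit_cycGen hq).pow q

def epsUnit : (FrobAlg q)ˣ := ((isUnit_cycGen hq).map (AdjoinRoot.of (frobPoly q))).unit

def xUnit : (FrobAlg q)ˣ := (isUnit_root_frobPoly hq).unit

def yUnit : (FrobAlg q)ˣ := epsUnit hq * (xUnit hq)⁻¹

lemma xUnit_mul_yUnit : xUnit hq * yUnit hq = epsUnit hq := by
  rw [yUnit, mul_left_comm, mul_inv_cancel, mul_one]

lemma epsUnit_pow : epsUnit hq ^ q = epsUnit hq := by
  have h : epsUnit hq ^ (q - 1) = 1 := Units.ext <| by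
    simp [epsUnit, ← map_pow, cycGen_pow_sub_one]
  rw [← pow_sub_mul_pow _ (by omega : 1 ≤ q), h, one_mul, pow_one]

lemma xUnit_pow_mul_yUnit_pow : xUnit hq ^ q * yUnit hq ^ q = xUnit hq * yUnit hq := by
  rw [← mul_pow, xUnit_mul_yUnit, epsUnit_pow]

lemma xUnit_pow_add_yUnit_pow :
    (↑(xUnit hq ^ q) : FrobAlg q) + ↑(yUnit hq ^ q) = xUnit hq + yUnit hq := by
  set r := AdjoinRoot.root (frobPoly q)
  set e := AdjoinRoot.of (frobPoly q) (cycGen q)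
  have hx : (xUnit hq : FrobAlg q) = r := rfl
  have hy : r * yUnit hq = e := congrArg Units.val (xUnit_mul_yUnit hq)
  have hxy : r ^ q * (yUnit hq : FrobAlg q) ^ q = e ^ q := by rw [← mul_pow, hy]
  have hrel : r ^ (2 * q) - r ^ (q + 1) - e * r ^ (q - 1) + e ^ q = 0 := by
    have h : AdjoinRoot.mk (frobPoly q)
        (X ^ (2 * q) - X ^ (q + 1) - C (cycGen q) * X ^ (q - 1) + C (cycGen q ^ q)) = 0 :=
      AdjoinRoot.mk_self
    simpa only [map_sub, map_add, map_mul, map_pow, AdjoinRoot.mk_X, AdjoinRoot.mk_C] using h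
  set s := r ^ (q - 1)
  have hs : r ^ q = s * r := by rw [← pow_succ]; congr; omega
  refine ((isUnit_root_frobPoly hq).pow q).mul_left_cancel ?_
  rw [Units.val_pow_eq_pow_val, Units.val_pow_eq_pow_val, hx]
  rw [two_mul, pow_add, pow_succ, hs] at hrel
  rw [hs] at hxy ⊢
  linear_combination hrel + hxy - s * hy

end FrobAlg

section Independence

variable {q : ℕ} (hq : 2 ≤ q)

lemma evalUnits_xUnit_yUnit_mapDomain {f : 𝓡} (hf : f ∈ glInv) :
    evalUnits (xUnit hq) (yUnit hq) (mapDomain (fun l : ℤ × ℤ => (q : ℤ) • l) f) =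
      evalUnits (xUnit hq) (yUnit hq) f := by
  rw [evalUnits_mapDomain_zsmul, zpow_natCast, zpow_natCast]
  exact evalUnits_eq_of_mem_glInv (xUnit_pow_add_yUnit_pow hq) (xUnit_pow_mul_yUnit_pow hq) hf

def frobBasis : Module.Basis (ZMod (q - 1) × Fin (frobPoly q).natDegree) ℤ (FrobAlg q) :=
  (AddMonoidAlgebra.basis (ZMod (q - 1)) ℤ).smulTower
    (AdjoinRoot.powerBasis' (frobPoly_monic hq)).basis

lemma frobBasis_apply (a : ZMod (q - 1)) (k : Fin (frobPoly q).natDegree) :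
    frobBasis hq (a, k) =
      AdjoinRoot.of (frobPoly q) (single a 1) * AdjoinRoot.root (frobPoly q) ^ (k : ℕ) := by
  erw [frobBasis, Module.Basis.smulTower_apply, PowerBasis.coe_basis, Algebra.smul_def,
    AdjoinRoot.algebraMap_eq, basis_apply]
  rfl

lemma epsUnit_pow_val (j : ℕ) :
    (↑(epsUnit hq ^ j) : FrobAlg q) =
      AdjoinRoot.of (frobPoly q) (single (j : ZMod (q - 1)) 1) := by
  rw [Units.val_pow_eq_pow_val, ← cycGen_pow, map_pow]
  rfl

lemma xUnit_pow_val (k : ℕ) :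
    (↑(xUnit hq ^ k) : FrobAlg q) = AdjoinRoot.root (frobPoly q) ^ k := by
  rw [Units.val_pow_eq_pow_val]
  rfl

lemma xUnit_pow_mul_evalUnits_glR {i : ℕ} (hi : i ≤ q - 1) (j : ℕ) :
    (↑(xUnit hq ^ (q - 1)) : FrobAlg q) *
        evalUnits (xUnit hq) (yUnit hq) (glR ((i + j : ℤ), (j : ℤ))) =
      AdjoinRoot.of (frobPoly q) (single (j : ZMod (q - 1)) 1) *
          AdjoinRoot.root (frobPoly q) ^ (q - 1 + i) +
        if i = 0 then 0
        else AdjoinRoot.of (frobPoly q) (single ((i + j : ℕ) : ZMod (q - 1)) 1) *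
          AdjoinRoot.root (frobPoly q) ^ (q - 1 - i) := by
  rcases eq_or_ne i 0 with rfl | hi0
  · rw [if_pos rfl, add_zero, Nat.cast_zero, zero_add, evalUnits_glR_diag,
      xUnit_mul_yUnit, zpow_natCast, epsUnit_pow_val, xUnit_pow_val, add_zero, mul_comm]
  · rw [if_neg hi0, add_comm (i : ℤ), evalUnits_glR_add _ _ _ hi0, xUnit_mul_yUnit, zpow_natCast,
      epsUnit_pow_val]
    have h1 : (↑(xUnit hq ^ (q - 1)) : FrobAlg q) * (xUnit hq : FrobAlg q) ^ i =
        AdjoinRoot.root (frobPoly q) ^ (q - 1 + i) := by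
      rw [xUnit_pow_val, pow_add]
      rfl
    have h2 : (↑(xUnit hq ^ (q - 1)) : FrobAlg q) * (yUnit hq : FrobAlg q) ^ i =
        AdjoinRoot.of (frobPoly q) (single (i : ZMod (q - 1)) 1) *
          AdjoinRoot.root (frobPoly q) ^ (q - 1 - i) := by
      rw [← epsUnit_pow_val, ← xUnit_pow_val, ← Units.val_pow_eq_pow_val, ← Units.val_mul,
        ← Units.val_mul, ← xUnit_mul_yUnit, mul_pow, ← pow_sub_mul_pow (xUnit hq) hi,
        mul_assoc, mul_comm]
    have hε : AdjoinRoot.of (frobPoly q) (single ((i + j : ℕ) : ZMod (q - 1)) 1) =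
        AdjoinRoot.of (frobPoly q) (single (j : ZMod (q - 1)) 1) *
          AdjoinRoot.of (frobPoly q) (single (i : ZMod (q - 1)) 1) := by
      rw [← map_mul, single_mul_single, Nat.cast_add, add_comm, mul_one]
    rw [hε]
    linear_combination AdjoinRoot.of (frobPoly q) (single (j : ZMod (q - 1)) 1) * (h1 + h2)

def coordIndex (p : Fin q × Fin (q - 1)) : ZMod (q - 1) × Fin (frobPoly q).natDegree :=
  (((p.2 : ℕ) : ZMod (q - 1)), ⟨q - 1 + p.1, by rw [natDegree_frobPoly hq]; omega⟩)

lemma frobBasis_repr_coordIndex (p ij : Fin q × Fin (q - 1)) :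
    (frobBasis hq).repr ((↑(xUnit hq ^ (q - 1)) : FrobAlg q) *
        evalUnits (xUnit hq) (yUnit hq)
          (glR (((ij.1 : ℕ) + (ij.2 : ℕ) : ℤ), ((ij.2 : ℕ) : ℤ))))
      (coordIndex hq p) = if p = ij then 1 else 0 := by
  obtain ⟨⟨i, hi⟩, ⟨j, hj⟩⟩ := ij
  obtain ⟨⟨a, ha⟩, ⟨b, hb⟩⟩ := p
  have hdeg := natDegree_frobPoly hq
  have hcast : ((j : ZMod (q - 1)) = b) ↔ j = b := by
    rw [ZMod.natCast_eq_natCast_iff', Nat.mod_eq_of_lt hj, Nat.mod_eq_of_lt hb]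
  rw [xUnit_pow_mul_evalUnits_glR hq (by omega : i ≤ q - 1) j,
    ← frobBasis_apply hq _ ⟨q - 1 + i, by omega⟩, map_add, Module.Basis.repr_self,
    Finsupp.add_apply, Finsupp.single_apply]
  have hlower : (frobBasis hq).repr (if i = 0 then 0 else
      AdjoinRoot.of (frobPoly q) (single ((i + j : ℕ) : ZMod (q - 1)) 1) *
        AdjoinRoot.root (frobPoly q) ^ (q - 1 - i))
      (coordIndex hq (⟨a, ha⟩, ⟨b, hb⟩)) = 0 := by
    split_ifs with hi0
    · simp
    · rw [← frobBasis_apply hq _ ⟨q - 1 - i, by omega⟩, Module.Basis.repr_self,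
        Finsupp.single_apply, if_neg]
      simp only [coordIndex, Prod.mk.injEq, Fin.mk.injEq, not_and]
      omega
  rw [hlower, add_zero]
  simp only [coordIndex, Prod.mk.injEq, Fin.mk.injEq, hcast]
  exact if_congr (by omega) rfl rfl

variable {F : glInv →ₐ[ℤ] glInv}
  (hF : ∀ f : glInv, (F f : 𝓡) = mapDomain (fun l : ℤ × ℤ => (q : ℤ) • l) (f : 𝓡))
include hq hF

lemma span_frob_sub_le_ker :
    Ideal.span {x : glInv | ∃ f : glInv, x = F f - f} ≤
      RingHom.ker ((evalUnits (xUnit hq) (yUnit hq)).comp glInv.val) :=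
  Ideal.span_le.mpr <| by
    rintro _ ⟨f, rfl⟩
    simp only [SetLike.mem_coe, RingHom.mem_ker, AlgHom.comp_apply, map_sub,
      Subalgebra.coe_val]
    rw [hF, evalUnits_xUnit_yUnit_mapDomain hq f.2, sub_self]

lemma linearIndependent_orbitBasisFamily :
    LinearIndependent ℤ
      (orbitBasisFamily q (Ideal.span {x : glInv | ∃ f : glInv, x = F f - f})) := by
  let χ := Ideal.Quotient.liftₐ _ ((evalUnits (xUnit hq) (yUnit hq)).comp glInv.val)
    fun a ha => span_frob_sub_le_ker hq hF ha
  let Φ := LinearMap.pi fun p =>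
    Finsupp.lapply (coordIndex hq p) ∘ₗ (frobBasis hq).repr.toLinearMap ∘ₗ
    LinearMap.mulLeft ℤ (↑(xUnit hq ^ (q - 1)) : FrobAlg q) ∘ₗ χ.toLinearMap
  have hΦ : Φ ∘ orbitBasisFamily q _ = Pi.basisFun ℤ (Fin q × Fin (q - 1)) := by
    ext ij p
    rw [Pi.basisFun_apply, Pi.single_apply]
    exact frobBasis_repr_coordIndex hq p ij
  exact LinearIndependent.of_comp Φ (hΦ ▸ (Pi.basisFun ℤ _).linearIndependent)

end Independence

end GL2

/-- **The algebra `B_{G∨}` for `G∨ = GL₂`.**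
Let `W = {1, s} ≅ ℤ/2` act on `X = ℤ² = ℤε₁ ⊕ ℤε₂` by swapping the coordinates, let
`F` act on `ℤ[X]^W` by `e(λ) ↦ e(qλ)`, and let `I ⊆ ℤ[X]^W` be the ideal generated by
`{F f − f}`.  Then `B = ℤ[X]^W/I` is a free `ℤ`-module of rank `q(q−1)`, with basis
`{ r((i+j)ε₁ + jε₂) + I : 0 ≤ i ≤ q−1, 0 ≤ j ≤ q−2 }`. -/
theorem stmt17 (q : ℕ) (hq : 2 ≤ q)
    (F : glInv →ₐ[ℤ] glInv)
    (hF : ∀ f : glInv, (F f : AddMonoidAlgebra ℤ (ℤ × ℤ)) =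
      AddMonoidAlgebra.ofCoeff (Finsupp.mapDomain (fun l : ℤ × ℤ => (q : ℤ) • l) (f : AddMonoidAlgebra ℤ (ℤ × ℤ)).coeff))
    (I : Ideal glInv) (hI : I = Ideal.span {x : glInv | ∃ f : glInv, x = F f - f})
    (hmem : ∀ l : ℤ × ℤ, glR l ∈ glInv) :
    Module.Free ℤ (glInv ⧸ I) ∧
    ∃ b : Module.Basis (Fin q × Fin (q - 1)) ℤ (glInv ⧸ I),
      ∀ ij : Fin q × Fin (q - 1),
        b ij = Ideal.Quotient.mk I
          ⟨glR (((ij.1 : ℕ) + (ij.2 : ℕ) : ℤ), ((ij.2 : ℕ) : ℤ)), hmem _⟩ := by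
  subst hI
  have hFI : ∀ f, F f - f ∈ Ideal.span {x : glInv | ∃ f : glInv, x = F f - f} :=
    fun f => Ideal.subset_span ⟨f, rfl⟩
  have hind := GL2.linearIndependent_orbitBasisFamily hq hF
  have hspan := GL2.span_orbitBasisFamily hq hF hFI
  let b := Module.Basis.mk hind hspan.ge
  exact ⟨.of_basis b, b, Module.Basis.mk_apply hind hspan.ge⟩

end
end
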